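/- L^p stability of the averaged Taylor polynomial (Lemma A.1 (iv)): for every s ∈ ℕ and C_η ≥ 0 there exists a constant C ≥ 0, depending only on s and C_η, with the following property. Whenever h, I, η are as in the context with sup_{σ∈ℝ} |(iteratedDeriv m η)(σ)| ≤ C_η · h^{−m−1} for all 0 ≤ m ≤ s, v : ℝ → X is of class C^s, p ∈ [1,∞], and 0 ≤ m ≤ s is an integer, then ‖iteratedDeriv m (T^s v)‖_{L^p(I;X)} ≤ C · ‖iteratedDeriv m v‖_{L^p(I;X)}, where ‖w‖_{L^p(I;X)} := (∫_I ‖w(σ)‖_X^p dσ)^{1/p} for p < ∞ and the essential supremum over I for p = ∞. -/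

import Mathlib

open MeasureTheory Finset
open scoped ENNReal

noncomputable section

/-- The averaged Taylor polynomial of order `s` of `v : ℝ → X` with respect to the
density `η` supported in the interval `I`:
`(T^s v)(τ) := Σ_{ℓ=0}^s (1/ℓ!) ∫_I ((τ−σ)^ℓ η(σ)) • v^{(ℓ)}(σ) dσ`. -/
def avgTaylor {X : Type*} [NormedAddCommGroup X] [NormedSpace ℝ X]
    (s : ℕ) (I : Set ℝ) (η : ℝ → ℝ) (v : ℝ → X) (τ : ℝ) : X :=
  ∑ ℓ ∈ Finset.range (s + 1),
    ((ℓ.factorial : ℝ))⁻¹ • ∫ σ in I, ((τ - σ) ^ ℓ * η σ) • iteratedDeriv ℓ v σ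

set_option linter.unusedSectionVars false

variable {X : Type*} [NormedAddCommGroup X] [NormedSpace ℝ X] [CompleteSpace X] {a b : ℝ}

lemma integrableOn_Ioo_of_continuous {g : ℝ → X} (hg : Continuous g) :
    IntegrableOn g (Set.Ioo a b) volume :=
  hg.integrableOn_Icc.mono_set Set.Ioo_subset_Icc_self

lemma hasDerivAt_intTerm (ℓ : ℕ) {η : ℝ → ℝ} (hη : Continuous η)
    {u : ℝ → X} (hu : Continuous u) (τ : ℝ) :
    HasDerivAt (fun t => ∫ σ in Set.Ioo a b, ((t - σ) ^ ℓ * η σ) • u σ)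
      (∫ σ in Set.Ioo a b, (((ℓ : ℝ) * (τ - σ) ^ (ℓ - 1)) * η σ) • u σ) τ := by
  have key := hasDerivAt_integral_of_dominated_loc_of_deriv_le
    (μ := volume.restrict (Set.Ioo a b))
    (F := fun t σ => ((t - σ) ^ ℓ * η σ) • u σ)
    (F' := fun t σ => (((ℓ : ℝ) * (t - σ) ^ (ℓ - 1)) * η σ) • u σ)
    (x₀ := τ) (s := Metric.ball τ 1)
    (bound := fun σ => (ℓ : ℝ) * (|τ| + 1 + |σ|) ^ (ℓ - 1) * |η σ| * ‖u σ‖)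
    (Metric.ball_mem_nhds τ one_pos) ?_ ?_ ?_ ?_ ?_ ?_
  · exact key.2
  · exact Filter.Eventually.of_forall fun t =>
      (Continuous.aestronglyMeasurable (by fun_prop))
  · exact integrableOn_Ioo_of_continuous (by fun_prop)
  · exact Continuous.aestronglyMeasurable (by fun_prop)
  · refine Filter.Eventually.of_forall fun σ t ht => ?_
    have h1 : |t - σ| ≤ |τ| + 1 + |σ| := by
      have h2 : |t - σ| ≤ |t - τ| + |τ - σ| := by
        calc |t - σ| = |(t - τ) + (τ - σ)| := by ring_nf
        _ ≤ |t - τ| + |τ - σ| := abs_add_le _ _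
      have h3 : |t - τ| < 1 := by
        simpa [Real.dist_eq] using Metric.mem_ball.mp ht
      have h4 : |τ - σ| ≤ |τ| + |σ| := abs_sub _ _
      linarith
    have : ‖(((ℓ : ℝ) * (t - σ) ^ (ℓ - 1)) * η σ) • u σ‖
        = (ℓ : ℝ) * |t - σ| ^ (ℓ - 1) * |η σ| * ‖u σ‖ := by
      rw [norm_smul, Real.norm_eq_abs, abs_mul, abs_mul, abs_pow, Nat.abs_cast]
    rw [this]
    show _ ≤ (ℓ:ℝ) * (|τ| + 1 + |σ|) ^ (ℓ - 1) * |η σ| * ‖u σ‖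
    have h0 : (0:ℝ) ≤ |t - σ| := abs_nonneg _
    have h5 : |t - σ| ^ (ℓ - 1) ≤ (|τ| + 1 + |σ|) ^ (ℓ - 1) := pow_le_pow_left₀ h0 h1 _
    have h6 : (0:ℝ) ≤ |η σ| := abs_nonneg _
    have h7 : (0:ℝ) ≤ ‖u σ‖ := norm_nonneg _
    have h8 : (0:ℝ) ≤ (ℓ:ℝ) := Nat.cast_nonneg _
    gcongr
  · exact integrableOn_Ioo_of_continuous (by fun_prop)
  · refine Filter.Eventually.of_forall fun σ t ht => ?_
    have h1 : HasDerivAt (fun t : ℝ => (t - σ) ^ ℓ) ((ℓ : ℝ) * (t - σ) ^ (ℓ - 1)) t := by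
      have h := (hasDerivAt_pow ℓ (t - σ)).comp t ((hasDerivAt_id t).sub_const σ)
      simp only [mul_one] at h
      exact h
    exact (h1.mul_const (η σ)).smul_const (u σ)

lemma contDiff_deriv_nat {v : ℝ → X} {n : ℕ} (hv : ContDiff ℝ (n + 1 : ℕ) v) :
    ContDiff ℝ (n : ℕ) (deriv v) := by
  have h : ContDiff ℝ ((n : WithTop ℕ∞) + 1) v := by exact_mod_cast hv
  exact (contDiff_succ_iff_deriv.mp h).2.2

lemma contDiff_iteratedDeriv_right :
    ∀ (m k : ℕ) (v : ℝ → X), ContDiff ℝ ((m + k : ℕ)) v → ContDiff ℝ (k : ℕ) (iteratedDeriv m v) := by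
  intro m
  induction m with
  | zero => intro k v hv; simpa using hv
  | succ m ih =>
    intro k v hv
    rw [iteratedDeriv_succ']
    have hv' : ContDiff ℝ ((m + k + 1 : ℕ)) v := by simpa [Nat.add_right_comm] using hv
    exact ih k (deriv v) (contDiff_deriv_nat hv')

lemma deriv_avgTaylor_succ {η : ℝ → ℝ} (hη : Continuous η) (n : ℕ)
    {v : ℝ → X} (hv : ContDiff ℝ (n + 1 : ℕ) v) :
    deriv (avgTaylor (n + 1) (Set.Ioo a b) η v) = avgTaylor n (Set.Ioo a b) η (deriv v) := by
  funext τ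
  have hD : HasDerivAt (avgTaylor (n + 1) (Set.Ioo a b) η v)
      (∑ ℓ ∈ Finset.range (n + 2), ((ℓ.factorial : ℝ))⁻¹ •
        ∫ σ in Set.Ioo a b, (((ℓ : ℝ) * (τ - σ) ^ (ℓ - 1)) * η σ) • iteratedDeriv ℓ v σ) τ := by
    apply HasDerivAt.fun_sum
    intro ℓ hℓ
    have hℓ' : (ℓ : WithTop ℕ∞) ≤ (n + 1 : ℕ) := by
      exact_mod_cast Nat.lt_succ_iff.mp (Finset.mem_range.mp hℓ)
    exact (hasDerivAt_intTerm ℓ hη (hv.continuous_iteratedDeriv ℓ hℓ') τ).const_smul _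
  rw [hD.deriv, Finset.sum_range_succ']
  have h0 : ((Nat.factorial 0 : ℝ))⁻¹ •
      ∫ σ in Set.Ioo a b, ((((0:ℕ) : ℝ) * (τ - σ) ^ (0 - 1)) * η σ) • iteratedDeriv 0 v σ = 0 := by
    simp
  rw [h0, add_zero, avgTaylor]
  refine Finset.sum_congr rfl fun k _ => ?_
  have hint : ∀ σ : ℝ, ((((k+1:ℕ) : ℝ) * (τ - σ) ^ (k + 1 - 1)) * η σ) • iteratedDeriv (k+1) v σ
      = ((k+1 : ℝ)) • (((τ - σ) ^ k * η σ) • iteratedDeriv k (deriv v) σ) := by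
    intro σ
    rw [← iteratedDeriv_succ', smul_smul]
    push_cast
    ring_nf
  simp_rw [hint]
  rw [integral_smul, smul_smul]
  congr 1
  rw [Nat.factorial_succ]
  push_cast
  field_simp

lemma iteratedDeriv_avgTaylor {η : ℝ → ℝ} (hη : Continuous η) :
    ∀ (m s : ℕ), m ≤ s → ∀ v : ℝ → X, ContDiff ℝ (s : ℕ) v →
    iteratedDeriv m (avgTaylor s (Set.Ioo a b) η v)
      = avgTaylor (s - m) (Set.Ioo a b) η (iteratedDeriv m v) := by
  intro m
  induction m with
  | zero => intro s _ v _; simp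
  | succ k ih =>
    intro s hs v hv
    obtain ⟨s', rfl⟩ : ∃ s', s = s' + 1 := ⟨s - 1, by omega⟩
    rw [iteratedDeriv_succ', deriv_avgTaylor_succ hη s' hv,
      ih s' (by omega) (deriv v) (contDiff_deriv_nat hv), ← iteratedDeriv_succ',
      Nat.succ_sub_succ]

lemma deriv_zero_outside {f : ℝ → ℝ} (hf : ContDiff ℝ (↑(⊤:ℕ∞)) f)
    (hs : Function.support f ⊆ Set.Ioo a b) {x : ℝ} (hx : x ∉ Set.Ioo a b) :
    deriv f x = 0 := by
  have hcont : Continuous (deriv f) := hf.continuous_deriv (by exact_mod_cast le_top)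
  have hzero : ∀ y : ℝ, y ∉ Set.Icc a b → deriv f y = 0 := by
    intro y hy
    have hev : f =ᶠ[nhds y] 0 := by
      filter_upwards [(isClosed_Icc (a := a) (b := b)).isOpen_compl.mem_nhds hy] with z hz
      by_contra hne
      exact hz (Set.Ioo_subset_Icc_self (hs hne))
    rw [hev.deriv_eq]
    exact deriv_const y 0
  have hIic : Set.EqOn (deriv f) 0 (Set.Iic a) := by
    have h1 : Set.EqOn (deriv f) 0 (Set.Iio a) := fun y hy =>
      hzero y (by simp only [Set.mem_Icc, not_and_or, not_le]; left; exact hy)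
    simpa [closure_Iio] using h1.closure hcont continuous_const
  have hIci : Set.EqOn (deriv f) 0 (Set.Ici b) := by
    have h1 : Set.EqOn (deriv f) 0 (Set.Ioi b) := fun y hy =>
      hzero y (by simp only [Set.mem_Icc, not_and_or, not_le]; right; exact hy)
    simpa [closure_Ioi] using h1.closure hcont continuous_const
  rcases le_or_gt x a with h | h
  · exact hIic h
  · rcases le_or_gt b x with h2 | h2
    · exact hIci h2
    · exact absurd (Set.mem_Ioo.mpr ⟨h, h2⟩) hx

lemma support_deriv_subset_Ioo {f : ℝ → ℝ} (hf : ContDiff ℝ (↑(⊤:ℕ∞)) f)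
    (hs : Function.support f ⊆ Set.Ioo a b) :
    Function.support (deriv f) ⊆ Set.Ioo a b := by
  intro x hx
  by_contra hxn
  exact hx (deriv_zero_outside hf hs hxn)

lemma ibp_one (hab : a < b) {f f' : ℝ → ℝ} (hf : ∀ x, HasDerivAt f (f' x) x)
    (hf' : Continuous f') (hfc : Continuous f) (hfa : f a = 0) (hfb : f b = 0)
    {g g' : ℝ → X} (hg : ∀ x, HasDerivAt g (g' x) x) (hg' : Continuous g')
    (hgc : Continuous g) :
    ∫ σ in Set.Ioo a b, f σ • g' σ = - ∫ σ in Set.Ioo a b, f' σ • g σ := by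
  have key : ∫ x in a..b, (f x • g' x + f' x • g x) = f b • g b - f a • g a := by
    apply intervalIntegral.integral_eq_sub_of_hasDerivAt
    · exact fun x _ => (hf x).smul (hg x)
    · exact (Continuous.add (hfc.smul hg') (hf'.smul hgc)).intervalIntegrable a b
  rw [hfa, hfb, zero_smul, zero_smul, sub_zero,
    intervalIntegral.integral_add (f := fun x => f x • g' x) (g := fun x => f' x • g x) ((hfc.smul hg').intervalIntegrable a b)
      ((hf'.smul hgc).intervalIntegrable a b)] at key
  have e1 : ∫ x in a..b, f x • g' x = ∫ σ in Set.Ioo a b, f σ • g' σ := by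
    rw [intervalIntegral.integral_of_le hab.le, integral_Ioc_eq_integral_Ioo]
  have e2 : ∫ x in a..b, f' x • g x = ∫ σ in Set.Ioo a b, f' σ • g σ := by
    rw [intervalIntegral.integral_of_le hab.le, integral_Ioc_eq_integral_Ioo]
  rw [e1, e2] at key
  exact eq_neg_of_add_eq_zero_left key

lemma ibp_iter (hab : a < b) :
    ∀ (n : ℕ) (f : ℝ → ℝ), ContDiff ℝ (↑(⊤:ℕ∞)) f → Function.support f ⊆ Set.Ioo a b →
    ∀ (u : ℝ → X), ContDiff ℝ (n : ℕ) u →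
    ∫ σ in Set.Ioo a b, f σ • iteratedDeriv n u σ
      = ∫ σ in Set.Ioo a b, ((-1 : ℝ) ^ n * iteratedDeriv n f σ) • u σ := by
  intro n
  induction n with
  | zero => intro f hf hsupp u hu; simp
  | succ n ih =>
    intro f hf hsupp u hu
    have hfa : f a = 0 := by
      by_contra hne
      exact absurd (hsupp hne).1 (lt_irrefl a)
    have hfb : f b = 0 := by
      by_contra hne
      exact absurd (hsupp hne).2 (lt_irrefl b)
    have hgder : ∀ x, HasDerivAt (iteratedDeriv n u) (iteratedDeriv (n + 1) u x) x := by
      intro x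
      rw [iteratedDeriv_succ]
      exact ((hu.differentiable_iteratedDeriv n
        (by exact_mod_cast Nat.lt_succ_self n)) x).hasDerivAt
    have hfder : ∀ x, HasDerivAt f (deriv f x) x :=
      fun x => ((hf.differentiable (by simp)) x).hasDerivAt
    rw [ibp_one hab hfder (hf.continuous_deriv (by exact_mod_cast le_top)) hf.continuous hfa hfb
      hgder (hu.continuous_iteratedDeriv (n+1) (by exact_mod_cast le_rfl))
      (hu.continuous_iteratedDeriv n (by exact_mod_cast Nat.le_succ n))]
    have hf' : ContDiff ℝ (↑(⊤:ℕ∞)) (deriv f) := (contDiff_infty_iff_deriv.mp hf).2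
    rw [ih (deriv f) hf' (support_deriv_subset_Ioo hf hsupp) u
      (hu.of_le (by exact_mod_cast Nat.le_succ n)), ← integral_neg]
    refine setIntegral_congr_fun measurableSet_Ioo fun σ _ => ?_
    rw [← iteratedDeriv_succ']
    rw [pow_succ]
    rw [← neg_smul]
    congr 1
    ring

lemma iteratedDeriv_pow_sub (τ : ℝ) (ℓ : ℕ) :
    ∀ i : ℕ, iteratedDeriv i (fun σ : ℝ => (τ - σ) ^ ℓ)
      = fun σ : ℝ => (-1 : ℝ) ^ i * (ℓ.descFactorial i : ℝ) * (τ - σ) ^ (ℓ - i) := by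
  intro i
  induction i with
  | zero => simp
  | succ i ih =>
    rw [iteratedDeriv_succ, ih]
    funext σ
    have h1 : HasDerivAt (fun σ : ℝ => (-1 : ℝ) ^ i * (ℓ.descFactorial i : ℝ) * (τ - σ) ^ (ℓ - i))
        ((-1 : ℝ) ^ i * (ℓ.descFactorial i : ℝ) * (((ℓ - i : ℕ) : ℝ) * (τ - σ) ^ (ℓ - i - 1) * (-1))) σ := by
      exact (((hasDerivAt_pow (ℓ - i) (τ - σ)).comp σ ((hasDerivAt_id σ).const_sub τ)).const_mul _)
    rw [h1.deriv, Nat.descFactorial_succ, show ℓ - (i+1) = ℓ - i - 1 from by omega]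
    push_cast
    ring

lemma kernel_bound (hab : a < b) {η : ℝ → ℝ} (hη : ContDiff ℝ (↑(⊤:ℕ∞)) η)
    {Cη : ℝ} (hCη : 0 ≤ Cη) {s : ℕ}
    (hbd : ∀ m ≤ s, ∀ σ : ℝ, |iteratedDeriv m η σ| ≤ Cη * (b - a) ^ (-(m : ℤ) - 1))
    {ℓ : ℕ} (hℓ : ℓ ≤ s) {τ σ : ℝ} (hτ : τ ∈ Set.Ioo a b) (hσ : σ ∈ Set.Ioo a b) :
    |iteratedDeriv ℓ (fun x => (τ - x) ^ ℓ * η x) σ|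
      ≤ 2 ^ ℓ * (ℓ.factorial : ℝ) * Cη / (b - a) := by
  have hba : (0:ℝ) < b - a := sub_pos.mpr hab
  have hzf : ∀ n : ℕ, (b - a) ^ n * (b - a) ^ (-(n : ℤ) - 1) = (b - a)⁻¹ := by
    intro n
    rw [← zpow_natCast (b - a) n, ← zpow_add₀ hba.ne']
    have h : (n : ℤ) + (-(n : ℤ) - 1) = -1 := by ring
    rw [h, zpow_neg_one]
  have hf : ContDiff ℝ (↑(⊤:ℕ∞)) (fun x : ℝ => (τ - x) ^ ℓ) :=
    (contDiff_const.sub contDiff_id).pow ℓ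
  have key := norm_iteratedFDeriv_mul_le (𝕜 := ℝ) hf hη σ (n := ℓ) (by exact_mod_cast (le_top : (ℓ : ℕ∞) ≤ ⊤))
  rw [norm_iteratedFDeriv_eq_norm_iteratedDeriv, Real.norm_eq_abs] at key
  refine key.trans ?_
  have hterm : ∀ i ∈ Finset.range (ℓ + 1),
      (ℓ.choose i : ℝ) * ‖iteratedFDeriv ℝ i (fun x : ℝ => (τ - x) ^ ℓ) σ‖
          * ‖iteratedFDeriv ℝ (ℓ - i) η σ‖
        ≤ (ℓ.choose i : ℝ) * ((ℓ.factorial : ℝ) * Cη / (b - a)) := by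
    intro i hi
    have hi' : i ≤ ℓ := Nat.lt_succ_iff.mp (Finset.mem_range.mp hi)
    rw [norm_iteratedFDeriv_eq_norm_iteratedDeriv, norm_iteratedFDeriv_eq_norm_iteratedDeriv,
      Real.norm_eq_abs, Real.norm_eq_abs, iteratedDeriv_pow_sub]
    have h1 : |(-1 : ℝ) ^ i * (ℓ.descFactorial i : ℝ) * (τ - σ) ^ (ℓ - i)|
        = (ℓ.descFactorial i : ℝ) * |τ - σ| ^ (ℓ - i) := by
      rw [abs_mul, abs_mul, abs_pow, abs_neg, abs_one, one_pow, one_mul, abs_pow,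
        Nat.abs_cast]
    rw [h1]
    have h2 : |τ - σ| ≤ b - a := by
      rw [abs_sub_le_iff]
      constructor <;> [linarith [hτ.1, hτ.2, hσ.1, hσ.2]; linarith [hτ.1, hτ.2, hσ.1, hσ.2]]
    have h3 : |iteratedDeriv (ℓ - i) η σ| ≤ Cη * (b - a) ^ (-((ℓ - i : ℕ) : ℤ) - 1) :=
      hbd (ℓ - i) (le_trans (Nat.sub_le _ _) hℓ) σ
    have h4 : (ℓ.descFactorial i : ℝ) ≤ (ℓ.factorial : ℝ) := by
      have hd : ℓ.descFactorial i ∣ ℓ.factorial :=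
        Dvd.intro_left _ (Nat.factorial_mul_descFactorial hi')
      exact_mod_cast Nat.le_of_dvd ℓ.factorial_pos hd
    have h5 : |τ - σ| ^ (ℓ - i) ≤ (b - a) ^ (ℓ - i) := pow_le_pow_left₀ (abs_nonneg _) h2 _
    calc (ℓ.choose i : ℝ) * ((ℓ.descFactorial i : ℝ) * |τ - σ| ^ (ℓ - i))
          * |iteratedDeriv (ℓ - i) η σ|
        ≤ (ℓ.choose i : ℝ) * ((ℓ.factorial : ℝ) * (b - a) ^ (ℓ - i))
          * (Cη * (b - a) ^ (-((ℓ - i : ℕ) : ℤ) - 1)) := by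
          gcongr
          all_goals first | positivity | exact abs_nonneg _
      _ = (ℓ.choose i : ℝ) * ((ℓ.factorial : ℝ) * Cη
            * ((b - a) ^ (ℓ - i) * (b - a) ^ (-((ℓ - i : ℕ) : ℤ) - 1))) := by ring
      _ = (ℓ.choose i : ℝ) * ((ℓ.factorial : ℝ) * Cη / (b - a)) := by
          rw [hzf (ℓ - i)]
          ring
  calc ∑ i ∈ Finset.range (ℓ + 1),
        (ℓ.choose i : ℝ) * ‖iteratedFDeriv ℝ i (fun x : ℝ => (τ - x) ^ ℓ) σ‖
          * ‖iteratedFDeriv ℝ (ℓ - i) η σ‖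
      ≤ ∑ i ∈ Finset.range (ℓ + 1), (ℓ.choose i : ℝ) * ((ℓ.factorial : ℝ) * Cη / (b - a)) :=
        Finset.sum_le_sum hterm
    _ = 2 ^ ℓ * (ℓ.factorial : ℝ) * Cη / (b - a) := by
        rw [← Finset.sum_mul]
        have : ∑ i ∈ Finset.range (ℓ + 1), (ℓ.choose i : ℝ) = (2 : ℝ) ^ ℓ := by
          exact_mod_cast congrArg (Nat.cast (R := ℝ)) (Nat.sum_range_choose ℓ)
        rw [this]
        ring

lemma avgTaylor_pointwise_bound (hab : a < b) {η : ℝ → ℝ} (hη : ContDiff ℝ (↑(⊤:ℕ∞)) η)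
    (hsupp : Function.support η ⊆ Set.Ioo a b)
    {Cη : ℝ} (hCη : 0 ≤ Cη) {s : ℕ}
    (hbd : ∀ m ≤ s, ∀ σ : ℝ, |iteratedDeriv m η σ| ≤ Cη * (b - a) ^ (-(m : ℤ) - 1))
    {k : ℕ} (hk : k ≤ s) {w : ℝ → X} (hw : ContDiff ℝ (k : ℕ) w)
    {τ : ℝ} (hτ : τ ∈ Set.Ioo a b) :
    ‖avgTaylor k (Set.Ioo a b) η w τ‖
      ≤ 2 ^ (s + 1) * Cη / (b - a) * ∫ σ in Set.Ioo a b, ‖w σ‖ := by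
  have hba : (0:ℝ) < b - a := sub_pos.mpr hab
  have hwint : IntegrableOn (fun σ => ‖w σ‖) (Set.Ioo a b) volume :=
    integrableOn_Ioo_of_continuous (hw.continuous.norm)
  have hwnn : (0:ℝ) ≤ ∫ σ in Set.Ioo a b, ‖w σ‖ :=
    integral_nonneg fun σ => norm_nonneg _
  have hterm : ∀ ℓ ∈ Finset.range (k + 1),
      ‖((ℓ.factorial : ℝ))⁻¹ • ∫ σ in Set.Ioo a b, ((τ - σ) ^ ℓ * η σ) • iteratedDeriv ℓ w σ‖
        ≤ 2 ^ ℓ * Cη / (b - a) * ∫ σ in Set.Ioo a b, ‖w σ‖ := by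
    intro ℓ hℓ
    have hℓk : ℓ ≤ k := Nat.lt_succ_iff.mp (Finset.mem_range.mp hℓ)
    have hfℓ : ContDiff ℝ (↑(⊤:ℕ∞)) (fun x : ℝ => (τ - x) ^ ℓ * η x) :=
      ((contDiff_const.sub contDiff_id).pow ℓ).mul hη
    have hsuppℓ : Function.support (fun x : ℝ => (τ - x) ^ ℓ * η x) ⊆ Set.Ioo a b :=
      fun x hx => hsupp (by
        intro h0
        exact hx (by simp [h0]))
    have hibp := ibp_iter hab ℓ (fun x : ℝ => (τ - x) ^ ℓ * η x) hfℓ hsuppℓ w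
      (hw.of_le (by exact_mod_cast hℓk))
    rw [norm_smul, Real.norm_eq_abs, abs_inv, Nat.abs_cast, hibp]
    have hb2 : ‖∫ σ in Set.Ioo a b, ((-1 : ℝ) ^ ℓ
          * iteratedDeriv ℓ (fun x : ℝ => (τ - x) ^ ℓ * η x) σ) • w σ‖
        ≤ ∫ σ in Set.Ioo a b, (2 ^ ℓ * (ℓ.factorial : ℝ) * Cη / (b - a)) * ‖w σ‖ := by
      refine norm_integral_le_of_norm_le (hwint.const_mul _) ?_
      filter_upwards [ae_restrict_mem measurableSet_Ioo] with σ hσ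
      rw [norm_smul, Real.norm_eq_abs, abs_mul, abs_pow, abs_neg, abs_one, one_pow, one_mul]
      exact mul_le_mul_of_nonneg_right (kernel_bound hab hη hCη hbd (le_trans hℓk hk) hτ hσ) (norm_nonneg _)
    rw [MeasureTheory.integral_const_mul] at hb2
    calc ((ℓ.factorial : ℝ))⁻¹ * ‖∫ σ in Set.Ioo a b, ((-1 : ℝ) ^ ℓ
          * iteratedDeriv ℓ (fun x : ℝ => (τ - x) ^ ℓ * η x) σ) • w σ‖
        ≤ ((ℓ.factorial : ℝ))⁻¹ * ((2 ^ ℓ * (ℓ.factorial : ℝ) * Cη / (b - a))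
            * ∫ σ in Set.Ioo a b, ‖w σ‖) := by
          exact mul_le_mul_of_nonneg_left hb2 (by positivity)
      _ = 2 ^ ℓ * Cη / (b - a) * ∫ σ in Set.Ioo a b, ‖w σ‖ := by
          have hfac : ((ℓ.factorial : ℝ)) ≠ 0 := by positivity
          field_simp
  calc ‖avgTaylor k (Set.Ioo a b) η w τ‖
      ≤ ∑ ℓ ∈ Finset.range (k + 1),
          ‖((ℓ.factorial : ℝ))⁻¹ • ∫ σ in Set.Ioo a b, ((τ - σ) ^ ℓ * η σ) • iteratedDeriv ℓ w σ‖ :=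
        norm_sum_le _ _
    _ ≤ ∑ ℓ ∈ Finset.range (k + 1), 2 ^ ℓ * Cη / (b - a) * ∫ σ in Set.Ioo a b, ‖w σ‖ :=
        Finset.sum_le_sum hterm
    _ ≤ 2 ^ (s + 1) * Cη / (b - a) * ∫ σ in Set.Ioo a b, ‖w σ‖ := by
        rw [← Finset.sum_mul, ← Finset.sum_div, ← Finset.sum_mul]
        have h1 : ∑ ℓ ∈ Finset.range (k + 1), (2:ℝ) ^ ℓ ≤ 2 ^ (s + 1) := by
          have h2 : ∑ ℓ ∈ Finset.range (k + 1), (2:ℝ) ^ ℓ = 2 ^ (k + 1) - 1 := by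
            have := geom_sum_eq (by norm_num : (2:ℝ) ≠ 1) (k + 1)
            rw [this]; norm_num
          rw [h2]
          have h3 : (2:ℝ) ^ (k + 1) ≤ 2 ^ (s + 1) :=
            pow_le_pow_right₀ (by norm_num) (by omega)
          linarith
        gcongr

/-- **`L^p` stability of the averaged Taylor polynomial** (Lemma A.1 (iv)): for every `s`
and `C_η` there is a constant `C = C(s, C_η)` such that whenever
`|η^{(m)}| ≤ C_η h^{−m−1}` for `0 ≤ m ≤ s` (with `h = b − a`), `v` is of class `C^s`,
`p ∈ [1, ∞]`, and `0 ≤ m ≤ s`, then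
`‖(T^s v)^{(m)}‖_{L^p(I;X)} ≤ C ‖v^{(m)}‖_{L^p(I;X)}`. -/
theorem avgTaylor_Lp_stability.{u} (s : ℕ) (Cη : ℝ) (hCη : 0 ≤ Cη) :
    ∃ C : ℝ, 0 ≤ C ∧
      ∀ (X : Type u) [NormedAddCommGroup X] [NormedSpace ℝ X] [CompleteSpace X]
        (a b : ℝ), a < b →
      ∀ η : ℝ → ℝ, ContDiff ℝ (⊤ : ℕ∞) η → Function.support η ⊆ Set.Ioo a b →
        (∫ σ, η σ) = 1 →
        (∀ m ≤ s, ∀ σ : ℝ, |iteratedDeriv m η σ| ≤ Cη * (b - a) ^ (-(m : ℤ) - 1)) →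
      ∀ v : ℝ → X, ContDiff ℝ (s : ℕ∞) v →
      ∀ p : ℝ≥0∞, 1 ≤ p → ∀ m ≤ s,
        eLpNorm (iteratedDeriv m (avgTaylor s (Set.Ioo a b) η v)) p
            (volume.restrict (Set.Ioo a b))
          ≤ ENNReal.ofReal C *
            eLpNorm (iteratedDeriv m v) p (volume.restrict (Set.Ioo a b)) := by

  refine ⟨2 ^ (s + 1) * Cη, by positivity, ?_⟩
  intro X _ _ _ a b hab η hη hsupp _ hbd v hv p hp m hm
  have hba : (0:ℝ) < b - a := sub_pos.mpr hab
  have hηT : ContDiff ℝ (↑(⊤:ℕ∞)) η := hη.of_le (by simp)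
  have hv' : ContDiff ℝ ((s : ℕ)) v := by exact_mod_cast hv
  set μ := volume.restrict (Set.Ioo a b) with hμ
  set w := iteratedDeriv m v with hwdef
  have hw : ContDiff ℝ ((s - m : ℕ)) w := by
    apply contDiff_iteratedDeriv_right m (s - m) v
    have h : m + (s - m) = s := by omega
    rw [h]; exact hv'
  have hwc : Continuous w := hw.continuous
  have hwint : Integrable w μ := integrableOn_Ioo_of_continuous hwc
  set L : ℝ := ∫ σ in Set.Ioo a b, ‖w σ‖ with hL
  set D : ℝ := 2 ^ (s + 1) * Cη / (b - a) with hD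
  have hDnn : 0 ≤ D := by positivity
  have hLnn : 0 ≤ L := integral_nonneg fun σ => norm_nonneg _
  have heq : iteratedDeriv m (avgTaylor s (Set.Ioo a b) η v)
      = avgTaylor (s - m) (Set.Ioo a b) η w :=
    iteratedDeriv_avgTaylor hη.continuous m s hm v hv'
  rw [heq]
  set H : ℝ≥0∞ := ENNReal.ofReal (b - a) with hHdef
  have hH0 : H ≠ 0 := by
    simp only [hHdef, ne_eq, ENNReal.ofReal_eq_zero, not_le]
    linarith
  have hHt : H ≠ ⊤ := ENNReal.ofReal_ne_top
  have hae : ∀ᵐ τ ∂μ, ‖avgTaylor (s - m) (Set.Ioo a b) η w τ‖ ≤ D * L := by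
    filter_upwards [ae_restrict_mem measurableSet_Ioo] with τ hτ
    exact avgTaylor_pointwise_bound hab hηT hsupp hCη hbd (Nat.sub_le s m) hw hτ
  have hr : p.toReal⁻¹ + (1 - p.toReal⁻¹) = 1 := by ring
  calc eLpNorm (avgTaylor (s - m) (Set.Ioo a b) η w) p μ
      ≤ H ^ p.toReal⁻¹ * ENNReal.ofReal (D * L) := by
        have h := eLpNorm_le_of_ae_bound (p := p) hae
        rwa [hμ, Measure.restrict_apply_univ, Real.volume_Ioo] at h
    _ = H ^ p.toReal⁻¹ * (ENNReal.ofReal D * eLpNorm w 1 μ) := by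
        rw [ENNReal.ofReal_mul hDnn, hL,
          ofReal_integral_norm_eq_lintegral_enorm hwint, ← eLpNorm_one_eq_lintegral_enorm]
    _ ≤ H ^ p.toReal⁻¹ * (ENNReal.ofReal D * (eLpNorm w p μ * H ^ (1 - p.toReal⁻¹))) := by
        gcongr
        have h := eLpNorm_le_eLpNorm_mul_rpow_measure_univ hp hwc.aestronglyMeasurable (μ := μ)
        rwa [hμ, Measure.restrict_apply_univ, Real.volume_Ioo, ENNReal.toReal_one,
          one_div, one_div, inv_one] at h
    _ = ENNReal.ofReal D * H * eLpNorm w p μ := by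
        rw [show H ^ p.toReal⁻¹ * (ENNReal.ofReal D * (eLpNorm w p μ * H ^ (1 - p.toReal⁻¹)))
            = ENNReal.ofReal D * (H ^ p.toReal⁻¹ * H ^ (1 - p.toReal⁻¹)) * eLpNorm w p μ by ring,
          ← ENNReal.rpow_add _ _ hH0 hHt, hr, ENNReal.rpow_one]
    _ = ENNReal.ofReal (2 ^ (s + 1) * Cη) * eLpNorm w p μ := by
        rw [hHdef, ← ENNReal.ofReal_mul hDnn]
        congr 2
        rw [hD]
        field_simp
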